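/- arXiv:2406.11089 — 2 statements merged into one kernel-verified Lean document; each statement's English description precedes it below -/
import Mathlib

section
/- Agmon-type inequality: let d ≥ 1, let V : ℝ^d → ℝ be continuous, λ ∈ ℝ, and let f : ℝ^d → ℝ be a C² function with compact support satisfying −(1/2)Δf + Vf = λf pointwise on ℝ^d. Then for every C¹ function φ : ℝ^d → ℝ one has ∫_{ℝ^d} e^{2φ(x)} ( V(x) − (1/2)‖∇φ(x)‖² − λ ) f(x)² dx ≤ 0. -/
/-!
Test the eigenvalue equation against `g = e^{2φ} f`. Green's identity turns `∫ g Δf` into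
`-∫ ∇g · ∇f`, and `∇g · ∇f = e^{2φ} (‖∇f + f ∇φ‖² - f² ‖∇φ‖²)` by completing the square.
Since `Δf = 2 (V - λ) f`, this gives
`2 ∫ e^{2φ} (V - ½‖∇φ‖² - λ) f² = -∫ e^{2φ} ‖∇f + f ∇φ‖² ≤ 0`.
-/

open MeasureTheory Real

noncomputable section

abbrev Rd (d : ℕ) : Type := EuclideanSpace ℝ (Fin d)

/-- the `i`-th partial derivative of a real-valued function on `ℝ^d` -/
def pd {d : ℕ} (i : Fin d) (g : Rd d → ℝ) (x : Rd d) : ℝ :=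
  fderiv ℝ g x (EuclideanSpace.single i 1)

theorem ContDiff.continuous_gradient {E : Type*} [NormedAddCommGroup E] [InnerProductSpace ℝ E]
    [CompleteSpace E] {n : WithTop ℕ∞} {φ : E → ℝ} (hφ : ContDiff ℝ n φ) (hn : n ≠ 0) :
    Continuous (gradient φ) :=
  (InnerProductSpace.toDual ℝ E).symm.continuous.comp (hφ.continuous_fderiv hn)

section

variable {d : ℕ}

theorem contDiff_pd {n : WithTop ℕ∞} {f : Rd d → ℝ} (hf : ContDiff ℝ (n + 1) f) (i : Fin d) :
    ContDiff ℝ n (pd i f) :=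
  (hf.fderiv_right le_rfl).clm_apply contDiff_const

theorem continuous_pd {f : Rd d → ℝ} (hf : ContDiff ℝ 1 f) (i : Fin d) : Continuous (pd i f) :=
  (contDiff_pd (n := 0) hf i).continuous

theorem HasCompactSupport.pd {f : Rd d → ℝ} (hf : HasCompactSupport f) (i : Fin d) :
    HasCompactSupport (pd i f) :=
  hf.fderiv_apply ℝ _

theorem gradient_apply_eq_pd (φ : Rd d → ℝ) (x : Rd d) (i : Fin d) :
    gradient φ x i = pd i φ x := by
  have h := InnerProductSpace.toDual_symm_apply (𝕜 := ℝ) (x := EuclideanSpace.single i (1 : ℝ))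
    (y := fderiv ℝ φ x)
  rw [EuclideanSpace.inner_single_right] at h
  simpa [pd, gradient] using h

theorem norm_gradient_sq_eq_sum_pd_sq (φ : Rd d → ℝ) (x : Rd d) :
    ‖gradient φ x‖ ^ 2 = ∑ i, pd i φ x ^ 2 := by
  rw [EuclideanSpace.norm_eq, sq_sqrt (Finset.sum_nonneg fun i _ => by positivity)]
  simp only [norm_eq_abs, sq_abs, gradient_apply_eq_pd]

theorem pd_exp_two_mul_mul {φ f : Rd d → ℝ} {x : Rd d} (hφ : DifferentiableAt ℝ φ x)
    (hf : DifferentiableAt ℝ f x) (i : Fin d) :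
    pd i (fun y => Real.exp (2 * φ y) * f y) x
      = Real.exp (2 * φ x) * (2 * pd i φ x * f x + pd i f x) := by
  unfold pd
  rw [fderiv_fun_mul (hφ.const_mul 2).exp hf, fderiv_exp (hφ.const_mul 2), fderiv_const_mul hφ]
  simp only [_root_.add_apply, FunLike.coe_smul, Pi.smul_apply, smul_eq_mul]
  ring

theorem neg_exp_mul_norm_gradient_sq_mul_sq_le {φ f : Rd d → ℝ} {x : Rd d}
    (hφ : DifferentiableAt ℝ φ x) (hf : DifferentiableAt ℝ f x) :
    -(Real.exp (2 * φ x) * ‖gradient φ x‖ ^ 2 * f x ^ 2)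
      ≤ ∑ i, pd i (fun y => Real.exp (2 * φ y) * f y) x * pd i f x := by
  have hsum : ∑ i, pd i (fun y => Real.exp (2 * φ y) * f y) x * pd i f x
      = ∑ i, Real.exp (2 * φ x) * (pd i f x + pd i φ x * f x) ^ 2
        - Real.exp (2 * φ x) * ‖gradient φ x‖ ^ 2 * f x ^ 2 := by
    rw [norm_gradient_sq_eq_sum_pd_sq, Finset.mul_sum, Finset.sum_mul, ← Finset.sum_sub_distrib]
    exact Finset.sum_congr rfl fun i _ => by rw [pd_exp_two_mul_mul hφ hf]; ring
  have hnonneg : 0 ≤ ∑ i, Real.exp (2 * φ x) * (pd i f x + pd i φ x * f x) ^ 2 :=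
    Finset.sum_nonneg fun i _ => by positivity
  linarith

theorem integrable_mul_pd_add_pd_mul {u v : Rd d → ℝ} (hu : ContDiff ℝ 1 u) (hv : ContDiff ℝ 1 v)
    (hvs : HasCompactSupport v) (i : Fin d) :
    Integrable (fun x => u x * pd i v x + pd i u x * v x) :=
  Continuous.integrable_of_hasCompactSupport
    ((hu.continuous.mul (continuous_pd hv i)).add ((continuous_pd hu i).mul hv.continuous))
    ((hvs.pd i).mul_left.add hvs.mul_left)

theorem integral_mul_pd_add_pd_mul_eq_zero {u v : Rd d → ℝ} (hu : ContDiff ℝ 1 u)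
    (hv : ContDiff ℝ 1 v) (hvs : HasCompactSupport v) (i : Fin d) :
    ∫ x, (u x * pd i v x + pd i u x * v x) = 0 := by
  have hpdv : Integrable fun x => u x * pd i v x :=
    (hu.continuous.mul (continuous_pd hv i)).integrable_of_hasCompactSupport (hvs.pd i).mul_left
  have hpdu : Integrable fun x => pd i u x * v x :=
    ((continuous_pd hu i).mul hv.continuous).integrable_of_hasCompactSupport hvs.mul_left
  have huv : Integrable fun x => u x * v x :=
    (hu.continuous.mul hv.continuous).integrable_of_hasCompactSupport hvs.mul_left
  have hparts : ∫ x, u x * pd i v x = -∫ x, pd i u x * v x :=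
    integral_mul_fderiv_eq_neg_fderiv_mul_of_integrable hpdu hpdv huv
      (fun x _ => hu.differentiable one_ne_zero x) (fun x _ => hv.differentiable one_ne_zero x)
  rw [integral_add hpdv hpdu, hparts, neg_add_cancel]

/-- Green's first identity `∫ g Δf = -∫ ∇g · ∇f`, in the form `∫ div (g ∇f) = 0`. -/
theorem integral_sum_mul_pd_pd_add_pd_mul_pd {f g : Rd d → ℝ} (hf : ContDiff ℝ 2 f)
    (hfs : HasCompactSupport f) (hg : ContDiff ℝ 1 g) :
    ∫ x, ∑ i, (g x * pd i (pd i f) x + pd i g x * pd i f x) = 0 := by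
  rw [integral_finsetSum _ fun i _ =>
    integrable_mul_pd_add_pd_mul hg (contDiff_pd hf i) (hfs.pd i) i]
  exact Finset.sum_eq_zero fun i _ =>
    integral_mul_pd_add_pd_mul_eq_zero hg (contDiff_pd hf i) (hfs.pd i) i

end

theorem agmon_inequality_general (d : ℕ)
    (V : Rd d → ℝ) (hV : Continuous V) (lam : ℝ)
    (f : Rd d → ℝ) (hf : ContDiff ℝ 2 f) (hsupp : HasCompactSupport f)
    (heig : ∀ x : Rd d, -(1/2) * (∑ i, pd i (pd i f) x) + V x * f x = lam * f x) :
    ∀ φ : Rd d → ℝ, ContDiff ℝ 1 φ →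
      (∫ x : Rd d, Real.exp (2 * φ x) * (V x - (1/2) * ‖gradient φ x‖ ^ 2 - lam) * f x ^ 2)
        ≤ 0 := by
  intro φ hφ
  set g : Rd d → ℝ := fun x => Real.exp (2 * φ x) * f x
  have hg : ContDiff ℝ 1 g := (contDiff_const.mul hφ).exp.mul (hf.of_le one_le_two)
  have hpointwise : ∀ x, 2 * (Real.exp (2 * φ x) * (V x - (1/2) * ‖gradient φ x‖ ^ 2 - lam)
      * f x ^ 2) ≤ ∑ i, (g x * pd i (pd i f) x + pd i g x * pd i f x) := fun x => by
    have hsquare := neg_exp_mul_norm_gradient_sq_mul_sq_le (hφ.differentiable one_ne_zero x)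
      (hf.differentiable two_ne_zero x)
    rw [Finset.sum_add_distrib, ← Finset.mul_sum,
      show ∑ i, pd i (pd i f) x = 2 * (V x - lam) * f x by linarith [heig x]]
    linarith
  have hint : Integrable fun x => Real.exp (2 * φ x) * (V x - (1/2) * ‖gradient φ x‖ ^ 2 - lam)
      * f x ^ 2 := by
    refine Continuous.integrable_of_hasCompactSupport ?_ (hsupp.comp_left (g := (· ^ 2))
      (zero_pow two_ne_zero)).mul_left
    have := hφ.continuous_gradient one_ne_zero
    fun_prop
  have hmono := integral_mono (hint.const_mul 2) (integrable_finsetSum _ fun i _ =>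
    integrable_mul_pd_add_pd_mul hg (contDiff_pd hf i) (hsupp.pd i) i) hpointwise
  rw [integral_const_mul, integral_sum_mul_pd_pd_add_pd_mul_pd hf hsupp hg] at hmono
  linarith

/-- Agmon-type inequality: if `−½Δf + Vf = λf` with `f` a compactly
supported `C²` function, then `∫ e^{2φ}(V − ½‖∇φ‖² − λ) f² ≤ 0` for every `C¹` weight `φ`. -/
theorem agmon_inequality (d : ℕ) (hd : 1 ≤ d)
    (V : Rd d → ℝ) (hV : Continuous V) (lam : ℝ)
    (f : Rd d → ℝ) (hf : ContDiff ℝ 2 f) (hsupp : HasCompactSupport f)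
    (heig : ∀ x : Rd d, -(1/2) * (∑ i, pd i (pd i f) x) + V x * f x = lam * f x) :
    ∀ φ : Rd d → ℝ, ContDiff ℝ 1 φ →
      (∫ x : Rd d, Real.exp (2 * φ x) * (V x - (1/2) * ‖gradient φ x‖ ^ 2 - lam) * f x ^ 2)
        ≤ 0 :=
  agmon_inequality_general d V hV lam f hf hsupp heig
end
end

section
/- Transversal gauge: let β : ℝ² → ℝ be a C¹ function and define the vector field A : ℝ² → ℝ² by A(x) := ( ∫₀¹ t β(t·x) dt ) · (−x₂, x₁). Then A is C¹ and ∂₁A₂(x) − ∂₂A₁(x) = β(x) for every x ∈ ℝ². -/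
/-!
Write `φ(x) = ∫₀¹ t β(t x) dt`, so that `A = φ · rot`. The product rule and `curl rot = 2` give
`curl (φ · rot) = 2 φ + Dφ(x) x`. Substituting `u = s t` gives `s² φ(s x) = ∫₀ˢ u β(u x) du`;
differentiating at `s = 1` yields the Euler-type identity `2 φ(x) + Dφ(x) x = β(x)`.
That `φ` is `C¹` is differentiation under the integral sign.
-/

open MeasureTheory Real

noncomputable section

abbrev R2 : Type := EuclideanSpace ℝ (Fin 2)

def pdR (i : Fin 2) (g : R2 → ℝ) (x : R2) : ℝ := fderiv ℝ g x (EuclideanSpace.single i 1)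

/-- rotation by 90 degrees: `(x₁, x₂) ↦ (−x₂, x₁)` -/
def rot (x : R2) : R2 := (WithLp.equiv 2 (Fin 2 → ℝ)).symm ![-(x 1), x 0]

/-- the transversal gauge potential `A(x) = (∫₀¹ t β(t·x) dt) · (−x₂, x₁)` -/
def transversalGauge (β : R2 → ℝ) (x : R2) : R2 :=
  (∫ t in (0:ℝ)..1, t * β (t • x)) • rot x

section RadialMoment

variable {E F : Type*} [NormedAddCommGroup E] [NormedSpace ℝ E]
  [NormedAddCommGroup F] [NormedSpace ℝ F]

theorem hasFDerivAt_smul_comp_smul {f : E → F} {x : E} {t : ℝ}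
    (hf : DifferentiableAt ℝ f (t • x)) (c : ℝ) :
    HasFDerivAt (fun y => c • f (t • y)) ((c * t) • fderiv ℝ f (t • x)) x := by
  refine ((hf.hasFDerivAt.comp x ((hasFDerivAt_id x).const_smul t)).const_smul c).congr_fderiv ?_
  ext v
  simp [mul_smul]

theorem hasFDerivAt_intervalIntegral_smul_comp_smul [FiniteDimensional ℝ E] {f : E → F}
    (hf : ContDiff ℝ 1 f) {c : ℝ → ℝ} (hc : Continuous c) (a b : ℝ) (x₀ : E) :
    HasFDerivAt (fun x => ∫ t in a..b, c t • f (t • x))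
      (∫ t in a..b, (c t * t) • fderiv ℝ f (t • x₀)) x₀ := by
  have : ProperSpace E := FiniteDimensional.proper_rclike ℝ E
  -- short-circuits an instance search that otherwise times out through `E →L[ℝ] F`
  have : SecondCountableTopologyEither ℝ (E →L[ℝ] F) := secondCountableTopologyEither_of_left _ _
  have hfc := hf.continuous
  have hf' := hf.continuous_fderiv one_ne_zero
  obtain ⟨C, hC⟩ := (isCompact_uIcc.prod (isCompact_closedBall x₀ 1)).exists_bound_of_continuousOn
    (f := fun p : ℝ × E => (c p.1 * p.1) • fderiv ℝ f (p.1 • p.2)) (by fun_prop)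
  refine intervalIntegral.hasFDerivAt_integral_of_dominated_of_fderiv_le (bound := fun _ => C)
    (Metric.ball_mem_nhds x₀ one_pos)
    (.of_forall fun x => (by fun_prop : Continuous _).aestronglyMeasurable)
    ((by fun_prop : Continuous _).intervalIntegrable a b)
    (by fun_prop : Continuous _).aestronglyMeasurable
    (.of_forall fun t ht x hx =>
      hC (t, x) ⟨Set.uIoc_subset_uIcc ht, Metric.ball_subset_closedBall hx⟩)
    intervalIntegrable_const
    (.of_forall fun t _ x _ => hasFDerivAt_smul_comp_smul (hf.differentiable one_ne_zero _) _)

theorem contDiff_intervalIntegral_smul_comp_smul [FiniteDimensional ℝ E] {f : E → F}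
    (hf : ContDiff ℝ 1 f) {c : ℝ → ℝ} (hc : Continuous c) (a b : ℝ) :
    ContDiff ℝ 1 fun x => ∫ t in a..b, c t • f (t • x) := by
  have hf' := hf.continuous_fderiv one_ne_zero
  refine contDiff_one_iff_hasFDerivAt.2 ⟨_, ?_,
    hasFDerivAt_intervalIntegral_smul_comp_smul hf hc a b⟩
  exact intervalIntegral.continuous_parametric_intervalIntegral_of_continuous'
    (by fun_prop) a b

def radialMoment (f : E → F) (x : E) : F := ∫ t in (0:ℝ)..1, t • f (t • x)

theorem sq_smul_radialMoment_smul (f : E → F) (x : E) (s : ℝ) :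
    s ^ 2 • radialMoment f (s • x) = ∫ u in (0:ℝ)..s, u • f (u • x) := by
  have h := intervalIntegral.smul_integral_comp_mul_left (a := 0) (b := 1)
    (fun u => u • f (u • x)) s
  simp only [mul_zero, mul_one] at h
  rw [← h, radialMoment, sq, mul_smul, ← intervalIntegral.integral_smul]
  congr! 3 with t
  rw [smul_smul, smul_smul, mul_comm t s]

theorem two_smul_radialMoment_add_fderiv [CompleteSpace F] {f : E → F} (hf : Continuous f)
    {x : E} (hd : DifferentiableAt ℝ (radialMoment f) x) :
    (2 : ℝ) • radialMoment f x + fderiv ℝ (radialMoment f) x x = f x := by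
  have hray : HasDerivAt (fun s : ℝ => s • x) x 1 := by
    simpa using (hasDerivAt_id (1 : ℝ)).smul_const x
  have hφ : HasDerivAt (fun s : ℝ => radialMoment f (s • x))
      (fderiv ℝ (radialMoment f) x x) 1 := by
    have h1 : HasFDerivAt (radialMoment f) (fderiv ℝ (radialMoment f) x) ((1 : ℝ) • x) := by
      rw [one_smul]
      exact hd.hasFDerivAt
    exact h1.comp_hasDerivAt 1 hray
  have hlhs : HasDerivAt (fun s : ℝ => s ^ 2 • radialMoment f (s • x))
      ((2 : ℝ) • radialMoment f x + fderiv ℝ (radialMoment f) x x) 1 := by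
    convert (hasDerivAt_pow 2 (1 : ℝ)).smul hφ using 1
    · rfl
    · norm_num [add_comm]
  have hrhs : HasDerivAt (fun s : ℝ => ∫ u in (0:ℝ)..s, u • f (u • x)) (f x) 1 := by
    have hc : Continuous fun u : ℝ => u • f (u • x) := by fun_prop
    simpa using intervalIntegral.integral_hasDerivAt_right (hc.intervalIntegrable 0 1)
      hc.aestronglyMeasurable.stronglyMeasurableAtFilter hc.continuousAt
  exact hlhs.unique (by simpa only [sq_smul_radialMoment_smul] using hrhs)

end RadialMoment

theorem EuclideanSpace.map_eq_sum_mul_map_single {ι : Type*} [Fintype ι] [DecidableEq ι]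
    (L : EuclideanSpace ℝ ι →L[ℝ] ℝ) (x : EuclideanSpace ℝ ι) :
    L x = ∑ i, x i * L (EuclideanSpace.single i 1) := by
  conv_lhs => rw [← (EuclideanSpace.basisFun ι ℝ).toBasis.sum_repr x]
  simp

theorem rot_apply_zero (x : R2) : rot x 0 = -x 1 := rfl

theorem rot_apply_one (x : R2) : rot x 1 = x 0 := rfl

theorem contDiff_rot {n : WithTop ℕ∞} : ContDiff ℝ n rot := by
  refine contDiff_piLp' (p := 2) fun i => ?_
  fin_cases i
  · exact (contDiff_piLp_apply (p := 2)).neg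
  · exact contDiff_piLp_apply (p := 2)

def curl (A : R2 → R2) (x : R2) : ℝ := pdR 0 (fun z => A z 1) x - pdR 1 (fun z => A z 0) x

theorem curl_smul_rot {φ : R2 → ℝ} {x : R2} (hφ : DifferentiableAt ℝ φ x) :
    curl (fun z => φ z • rot z) x = 2 * φ x + fderiv ℝ φ x x := by
  simp only [curl, pdR, PiLp.smul_apply, rot_apply_zero, rot_apply_one, smul_eq_mul]
  have h₁ : HasFDerivAt (fun z : R2 => φ z * z 0) _ x :=
    hφ.hasFDerivAt.mul (PiLp.hasFDerivAt_apply 2 x 0)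
  have h₂ : HasFDerivAt (fun z : R2 => φ z * -z 1) _ x :=
    hφ.hasFDerivAt.mul (PiLp.hasFDerivAt_apply 2 x 1).neg
  rw [h₁.fderiv, h₂.fderiv, EuclideanSpace.map_eq_sum_mul_map_single (fderiv ℝ φ x),
    Fin.sum_univ_two]
  simp only [add_apply, smul_apply, neg_apply, PiLp.proj_apply, PiLp.single_eq_same,
    smul_eq_mul, mul_one, smul_neg, neg_smul]
  ring

/-- The transversal gauge of a `C¹` field `β` is a `C¹` vector potential
with `curl A = β`. -/
theorem transversal_gauge_curl (β : R2 → ℝ) (hβ : ContDiff ℝ 1 β) :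
    ContDiff ℝ 1 (transversalGauge β) ∧
      ∀ x : R2,
        pdR 0 (fun z => transversalGauge β z 1) x
          - pdR 1 (fun z => transversalGauge β z 0) x = β x := by
  have hA : transversalGauge β = fun x => radialMoment β x • rot x := rfl
  have hφ : ContDiff ℝ 1 (radialMoment β) :=
    contDiff_intervalIntegral_smul_comp_smul hβ continuous_id 0 1
  refine ⟨hA ▸ hφ.smul contDiff_rot, fun x => ?_⟩
  have hd := hφ.differentiable one_ne_zero x
  calc curl (transversalGauge β) x
      = 2 * radialMoment β x + fderiv ℝ (radialMoment β) x x := curl_smul_rot hd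
    _ = β x := two_smul_radialMoment_add_fderiv hβ.continuous hd
end
end
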